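/- arXiv:1202.5413 — 12 statements merged into one kernel-verified Lean document; each statement's English description precedes it below -/
import Mathlib

section
/- Every nonzero codeword of an irreducible polynomial remainder code has degree weight strictly greater than N − K; that is, for any nonzero a(x) ∈ R_{M_k}, w_D(ψ(a)) > N − K. -/
open Polynomial

open scoped Classical

/-- Every nonzero codeword of an irreducible polynomial remainder code has
degree weight strictly greater than `N - K`: for nonzero `a` with `deg a < K`,
`∑_{i : m i ∤ a} deg m i > N - K`. -/
theorem stmt_2 {F : Type*} [Field F] (n k : ℕ) (hk1 : 1 ≤ k) (hkn : k ≤ n)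
    (m : Fin n → F[X]) (hm : ∀ i, (m i).Monic) (hirr : ∀ i, Irreducible (m i))
    (hinj : Function.Injective m)
    (N K : ℕ) (hN : N = ∑ i, (m i).natDegree)
    (hK : K = ∑ i ∈ Finset.univ.filter (fun i : Fin n => (i : ℕ) < k), (m i).natDegree)
    (a : F[X]) (ha : a ≠ 0) (hdeg : a.degree < (K : WithBot ℕ)) :
    N - K < ∑ i ∈ Finset.univ.filter (fun i => ¬ m i ∣ a), (m i).natDegree := by
  set S := Finset.univ.filter (fun i : Fin n => m i ∣ a) with hS
  -- product over S divides a
  have hdvd : (∏ i ∈ S, m i) ∣ a := by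
    apply Finset.prod_dvd_of_coprime
    · intro i _ j _ hij
      refine (hirr i).coprime_iff_not_dvd.mpr fun h => ?_
      exact hij (hinj (eq_of_monic_of_associated (hm i) (hm j)
        ((hirr i).associated_of_dvd (hirr j) h)))
    · intro i hi
      simpa [hS] using (Finset.mem_filter.mp hi).2
  have hsum : ∑ i ∈ S, (m i).natDegree ≤ a.natDegree := by
    calc ∑ i ∈ S, (m i).natDegree = (∏ i ∈ S, m i).natDegree := by
          rw [Polynomial.natDegree_prod _ _ fun i _ => (hirr i).ne_zero]
      _ ≤ a.natDegree := Polynomial.natDegree_le_of_dvd hdvd ha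
  have haK : a.natDegree < K := by
    rwa [← Polynomial.natDegree_lt_iff_degree_lt ha] at hdeg
  have hsK : ∑ i ∈ S, (m i).natDegree < K := lt_of_le_of_lt hsum haK
  have hKN : K ≤ N := by
    rw [hK, hN]; exact Finset.sum_le_sum_of_subset (Finset.filter_subset _ _)
  have hsplit : ∑ i ∈ S, (m i).natDegree
      + ∑ i ∈ Finset.univ.filter (fun i => ¬ m i ∣ a), (m i).natDegree = N := by
    rw [hN, hS]; exact Finset.sum_filter_add_sum_filter_not _ _ _
  omega
end

section
/- The minimum degree-weighted distance of an irreducible polynomial remainder code C satisfies d_minD(C) > N − K. -/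
/-!
The difference `c = a - b` is a nonzero polynomial of degree `< K`. The moduli dividing `c` are
distinct monic irreducibles, hence pairwise coprime, so their product divides `c` and their
degrees add up to at most `deg c < K`. The moduli not dividing `c` therefore carry total degree
more than `N - K` (which needs `K ≤ N`, since `N - K` is truncated subtraction).
-/

open Polynomial

open scoped Classical

open Function

namespace Polynomial

theorem isCoprime_of_monic_of_irreducible_of_ne {K : Type*} [Field K] {p q : K[X]}
    (hp : p.Monic) (hq : q.Monic) (hp' : Irreducible p) (hq' : Irreducible q) (hpq : p ≠ q) :
    IsCoprime p q :=
  hp'.coprime_iff_not_dvd.mpr fun hdvd =>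
    hpq (eq_of_monic_of_associated hp hq (hp'.associated_of_dvd hq' hdvd))

theorem sum_natDegree_filter_dvd_le {R ι : Type*} [CommRing R] [IsDomain R] {s : Finset ι}
    {m : ι → R[X]} (hm : ∀ i ∈ s, m i ≠ 0) (hcop : (s : Set ι).Pairwise (IsCoprime on m))
    {c : R[X]} (hc : c ≠ 0) :
    ∑ i ∈ s with m i ∣ c, (m i).natDegree ≤ c.natDegree := by
  have hprod : (∏ i ∈ s with m i ∣ c, m i) ∣ c :=
    Finset.prod_dvd_of_coprime (hcop.mono (Finset.coe_subset.mpr (Finset.filter_subset _ _)))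
      fun i hi => (Finset.mem_filter.mp hi).2
  rw [← natDegree_prod _ _ fun i hi => hm i (Finset.mem_filter.mp hi).1]
  exact natDegree_le_of_dvd hprod hc

end Polynomial

theorem stmt_3_general {F : Type*} [Field F] (n k : ℕ)
    (m : Fin n → F[X]) (hm : ∀ i, (m i).Monic) (hirr : ∀ i, Irreducible (m i))
    (hinj : Function.Injective m)
    (N K : ℕ) (hN : N = ∑ i, (m i).natDegree)
    (hK : K = ∑ i ∈ Finset.univ.filter (fun i : Fin n => (i : ℕ) < k), (m i).natDegree)
    (a b : F[X]) (hab : a ≠ b)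
    (hda : a.degree < (K : WithBot ℕ)) (hdb : b.degree < (K : WithBot ℕ)) :
    N - K < ∑ i ∈ Finset.univ.filter (fun i => ¬ m i ∣ (a - b)), (m i).natDegree := by
  have hc : a - b ≠ 0 := sub_ne_zero.mpr hab
  have hdeg : (a - b).natDegree < K :=
    (natDegree_lt_iff_degree_lt hc).mpr ((degree_sub_le a b).trans_lt (max_lt hda hdb))
  have hcop : ((Finset.univ : Finset (Fin n)) : Set (Fin n)).Pairwise (IsCoprime on m) :=
    fun i _ j _ hij =>
      isCoprime_of_monic_of_irreducible_of_ne (hm i) (hm j) (hirr i) (hirr j) (hinj.ne hij)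
  have hdividing := sum_natDegree_filter_dvd_le (fun i _ => (hirr i).ne_zero) hcop hc
  have hsplit := Finset.sum_filter_add_sum_filter_not Finset.univ (fun i => m i ∣ (a - b))
    fun i => (m i).natDegree
  have hKN : K ≤ N := hK ▸ hN ▸ Finset.sum_le_sum_of_subset (Finset.filter_subset _ _)
  omega

/-- The minimum degree-weighted distance of an irreducible polynomial remainder
code satisfies `d_minD(C) > N - K`: for any two distinct codewords (messages
`a ≠ b` of degree `< K`), the degree-weighted distance
`∑_{i : m i ∤ (a - b)} deg m i` exceeds `N - K`. -/
theorem stmt_3 {F : Type*} [Field F] (n k : ℕ) (hk1 : 1 ≤ k) (hkn : k ≤ n)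
    (m : Fin n → F[X]) (hm : ∀ i, (m i).Monic) (hirr : ∀ i, Irreducible (m i))
    (hinj : Function.Injective m)
    (N K : ℕ) (hN : N = ∑ i, (m i).natDegree)
    (hK : K = ∑ i ∈ Finset.univ.filter (fun i : Fin n => (i : ℕ) < k), (m i).natDegree)
    (a b : F[X]) (hab : a ≠ b)
    (hda : a.degree < (K : WithBot ℕ)) (hdb : b.degree < (K : WithBot ℕ)) :
    N - K < ∑ i ∈ Finset.univ.filter (fun i => ¬ m i ∣ (a - b)), (m i).natDegree :=
  stmt_3_general n k m hm hirr hinj N K hN hK a b hab hda hdb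
end

section
/- If the moduli satisfy the ordered-degree condition deg m_0 ≤ deg m_1 ≤ ... ≤ deg m_{n-1}, then every nonzero codeword ψ(a) with a ∈ R_{M_k}, a ≠ 0, has Hamming weight w_H(ψ(a)) ≥ n − k + 1. -/
/-!
If `k` of the moduli divided `a`, their product would divide `a`, since distinct monic
irreducible polynomials are pairwise coprime. Its degree is a sum of `k` of the degrees
`deg m_i`, which by the ordering is at least the sum `K` of the `k` smallest ones; this
contradicts `deg a < K`. Hence fewer than `k` residues vanish.
-/

open Polynomial Finset

open scoped Classical

theorem Fin.val_le_val_apply_of_strictMono {k n : ℕ} {g : Fin k → Fin n} (hg : StrictMono g)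
    (j : Fin k) : (j : ℕ) ≤ g j :=
  calc (j : ℕ) = #(Iio j) := (Fin.card_Iio j).symm
    _ ≤ #(Iio (g j)) :=
      card_le_card_of_injOn g (fun _ hi => by simpa using hg (by simpa using hi))
        hg.injective.injOn
    _ = g j := Fin.card_Iio (g j)

theorem Fin.sum_filter_val_lt_le_sum_of_monotone {M : Type*} [AddCommMonoid M] [PartialOrder M]
    [IsOrderedAddMonoid M] {n k : ℕ} {f : Fin n → M} (hf : Monotone f) {T : Finset (Fin n)}
    (hT : #T = k) :
    ∑ i ∈ univ.filter (fun i : Fin n => (i : ℕ) < k), f i ≤ ∑ i ∈ T, f i := by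
  have hkn : k ≤ n := hT ▸ card_finset_fin_le T
  have hfirst : univ.filter (fun i : Fin n => (i : ℕ) < k) = univ.map (Fin.castLEEmb hkn) := by
    ext i
    simp only [mem_filter, mem_univ, true_and, mem_map, Fin.castLEEmb_apply]
    exact ⟨fun hi => ⟨⟨i, hi⟩, rfl⟩, by rintro ⟨j, rfl⟩; exact j.2⟩
  let e := T.orderEmbOfFin hT
  calc ∑ i ∈ univ.filter (fun i : Fin n => (i : ℕ) < k), f i
      = ∑ j : Fin k, f (Fin.castLE hkn j) := by rw [hfirst, sum_map]; rfl
    _ ≤ ∑ j : Fin k, f (e j) :=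
      sum_le_sum fun j _ => hf (Fin.val_le_val_apply_of_strictMono e.strictMono j)
    _ = ∑ i ∈ T, f i := by
      rw [← T.map_orderEmbOfFin_univ hT, sum_map]; rfl

theorem Polynomial.pairwise_isCoprime_of_monic_of_irreducible {F ι : Type*} [Field F]
    {m : ι → F[X]} (hm : ∀ i, (m i).Monic) (hirr : ∀ i, Irreducible (m i))
    (hinj : Function.Injective m) : Pairwise (Function.onFun IsCoprime m) := fun i j hij =>
  (hirr i).coprime_iff_not_dvd.mpr fun hdvd =>
    hij (hinj (eq_of_monic_of_associated (hm i) (hm j)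
      ((hirr i).associated_of_dvd (hirr j) hdvd)))

theorem Polynomial.sum_natDegree_le_of_forall_dvd {R ι : Type*} [CommSemiring R] [NoZeroDivisors R]
    {m : ι → R[X]} {T : Finset ι} (hcop : (T : Set ι).Pairwise (Function.onFun IsCoprime m))
    (hm : ∀ i ∈ T, m i ≠ 0) {a : R[X]} (ha : a ≠ 0) (hdvd : ∀ i ∈ T, m i ∣ a) :
    ∑ i ∈ T, (m i).natDegree ≤ a.natDegree := by
  rw [← natDegree_prod _ _ hm]
  exact natDegree_le_of_dvd (prod_dvd_of_coprime hcop hdvd) ha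

theorem stmt_4_general {F : Type*} [Field F] (n k : ℕ) (hkn : k ≤ n)
    (m : Fin n → F[X]) (hm : ∀ i, (m i).Monic) (hirr : ∀ i, Irreducible (m i))
    (hinj : Function.Injective m)
    (hord : ∀ i j : Fin n, i ≤ j → (m i).natDegree ≤ (m j).natDegree)
    (K : ℕ)
    (hK : K = ∑ i ∈ Finset.univ.filter (fun i : Fin n => (i : ℕ) < k), (m i).natDegree)
    (a : F[X]) (ha : a ≠ 0) (hdeg : a.degree < (K : WithBot ℕ)) :
    n - k + 1 ≤ (Finset.univ.filter (fun i => ¬ m i ∣ a)).card := by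
  have hfew : #(univ.filter fun i => m i ∣ a) < k := by
    by_contra! hge
    obtain ⟨T, hTdvd, hT⟩ := exists_subset_card_eq hge
    have hKT : K ≤ ∑ i ∈ T, (m i).natDegree :=
      hK ▸ Fin.sum_filter_val_lt_le_sum_of_monotone hord hT
    have hTa : ∑ i ∈ T, (m i).natDegree ≤ a.natDegree :=
      sum_natDegree_le_of_forall_dvd
        ((pairwise_isCoprime_of_monic_of_irreducible hm hirr hinj).set_pairwise _)
        (fun i _ => (hm i).ne_zero) ha (fun i hi => (mem_filter.mp (hTdvd hi)).2)
    have haK : a.natDegree < K := (natDegree_lt_iff_degree_lt ha).mpr hdeg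
    omega
  have hsplit := card_filter_add_card_filter_not (s := univ) (fun i : Fin n => m i ∣ a)
  rw [card_univ, Fintype.card_fin] at hsplit
  omega

/-- Under the ordered-degree condition `deg m_0 ≤ … ≤ deg m_{n-1}`, every
nonzero codeword (message `a ≠ 0`, `deg a < K`) has Hamming weight
(number of positions `i` with `a mod m i ≠ 0`) at least `n - k + 1`. -/
theorem stmt_4 {F : Type*} [Field F] (n k : ℕ) (hk1 : 1 ≤ k) (hkn : k ≤ n)
    (m : Fin n → F[X]) (hm : ∀ i, (m i).Monic) (hirr : ∀ i, Irreducible (m i))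
    (hinj : Function.Injective m)
    (hord : ∀ i j : Fin n, i ≤ j → (m i).natDegree ≤ (m j).natDegree)
    (K : ℕ)
    (hK : K = ∑ i ∈ Finset.univ.filter (fun i : Fin n => (i : ℕ) < k), (m i).natDegree)
    (a : F[X]) (ha : a ≠ 0) (hdeg : a.degree < (K : WithBot ℕ)) :
    n - k + 1 ≤ (Finset.univ.filter (fun i => ¬ m i ∣ a)).card :=
  stmt_4_general n k hkn m hm hirr hinj hord K hK a ha hdeg
end

section
/- If the moduli satisfy deg m_0 ≤ deg m_1 ≤ ... ≤ deg m_{n-1}, the minimum Hamming distance of the irreducible polynomial remainder code C equals n − k + 1. -/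
open Polynomial

open scoped Classical

/-! Two codewords `ψ(a)`, `ψ(b)` agree at position `i` iff `m i ∣ a - b`. Distinct monic
irreducible moduli are pairwise coprime, so the moduli dividing a nonzero `c = a - b` have
total degree at most `deg c < K`; as the degrees are sorted, any `k` of them have total degree
at least `K`, hence fewer than `k` positions agree. Conversely, the product of the first `k - 1`
moduli has degree `< K` and is divisible by exactly those `k - 1` moduli. -/

open Finset

namespace Fin

theorem val_le_of_strictMono {k n : ℕ} {f : Fin k → Fin n} (hf : StrictMono f) (j : Fin k) :
    (j : ℕ) ≤ f j := by
  have := card_le_card_of_injOn f (s := Iic j) (t := Iic (f j))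
    (fun x hx => by simpa using hf.monotone (by simpa using hx)) hf.injective.injOn
  simpa using this

theorem filter_val_lt_eq_map_castLEEmb {n k : ℕ} (hkn : k ≤ n) :
    univ.filter (fun i : Fin n => (i : ℕ) < k) = univ.map (castLEEmb hkn) := by
  ext i
  simp only [mem_filter, mem_univ, true_and, mem_map]
  exact ⟨fun hi => ⟨⟨i, hi⟩, rfl⟩, by rintro ⟨j, rfl⟩; exact j.isLt⟩

theorem sum_filter_val_lt_le_sum {M : Type*} [AddCommMonoid M] [PartialOrder M]
    [IsOrderedAddMonoid M] {n k : ℕ} (hkn : k ≤ n) {d : Fin n → M} (hd : Monotone d)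
    {S : Finset (Fin n)} (hS : #S = k) :
    ∑ i ∈ univ.filter (fun i : Fin n => (i : ℕ) < k), d i ≤ ∑ i ∈ S, d i := by
  rw [filter_val_lt_eq_map_castLEEmb hkn, sum_map, ← S.map_orderEmbOfFin_univ hS, sum_map]
  exact sum_le_sum fun j _ => hd (val_le_of_strictMono (S.orderEmbOfFin hS).strictMono j)

end Fin

theorem Finset.dvd_prod_iff_mem_of_prime {ι M : Type*} [CommMonoidWithZero M] {p : ι → M}
    (hp : ∀ i, Prime (p i)) (hdvd : ∀ i j, p i ∣ p j → i = j) (T : Finset ι) (i : ι) :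
    p i ∣ ∏ j ∈ T, p j ↔ i ∈ T := by
  refine ⟨fun h => ?_, fun h => dvd_prod_of_mem p h⟩
  obtain ⟨j, hj, hij⟩ := (hp i).exists_mem_finset_dvd h
  rwa [hdvd i j hij]

namespace Polynomial

variable {F : Type*} [Field F]

theorem Monic.eq_of_dvd_of_irreducible {p q : F[X]} (hp : p.Monic) (hq : q.Monic)
    (hpi : Irreducible p) (hqi : Irreducible q) (h : p ∣ q) : p = q :=
  eq_of_monic_of_associated hp hq (hpi.associated_of_dvd hqi h)

theorem sum_natDegree_le_of_forall_dvd_s5 {ι : Type*} {m : ι → F[X]}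
    (hirr : ∀ i, Irreducible (m i)) (hdvd : ∀ i j, m i ∣ m j → i = j) {c : F[X]} (hc : c ≠ 0)
    {S : Finset ι} (hS : ∀ i ∈ S, m i ∣ c) :
    ∑ i ∈ S, (m i).natDegree ≤ c.natDegree := by
  have hprod : ∏ i ∈ S, m i ∣ c := prod_dvd_of_coprime
    (fun i _ j _ hij => (hirr i).coprime_iff_not_dvd.mpr fun h => hij (hdvd i j h)) hS
  rw [← natDegree_prod _ _ fun i _ => (hirr i).ne_zero]
  exact natDegree_le_of_dvd hprod hc

theorem card_filter_dvd_lt {n k : ℕ} (hkn : k ≤ n) {m : Fin n → F[X]}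
    (hirr : ∀ i, Irreducible (m i)) (hdvd : ∀ i j, m i ∣ m j → i = j)
    (hord : Monotone fun i => (m i).natDegree) {c : F[X]} (hc : c ≠ 0)
    (hdeg : c.natDegree < ∑ i ∈ univ.filter (fun i : Fin n => (i : ℕ) < k), (m i).natDegree) :
    #(univ.filter fun i => m i ∣ c) < k := by
  by_contra! hcard
  obtain ⟨S, hSsub, hS⟩ := exists_subset_card_eq hcard
  have hS_dvd : ∀ i ∈ S, m i ∣ c := fun i hi => (mem_filter.mp (hSsub hi)).2
  have := Fin.sum_filter_val_lt_le_sum hkn hord hS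
  have := sum_natDegree_le_of_forall_dvd_s5 hirr hdvd hc hS_dvd
  omega

end Polynomial

/-- Under the ordered-degree condition, the minimum Hamming distance of the
irreducible polynomial remainder code equals `n - k + 1`: `n - k + 1` is the
least element of the set of Hamming distances between distinct codewords. -/
theorem stmt_5 {F : Type*} [Field F] (n k : ℕ) (hk1 : 1 ≤ k) (hkn : k ≤ n)
    (m : Fin n → F[X]) (hm : ∀ i, (m i).Monic) (hirr : ∀ i, Irreducible (m i))
    (hinj : Function.Injective m)
    (hord : ∀ i j : Fin n, i ≤ j → (m i).natDegree ≤ (m j).natDegree)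
    (K : ℕ)
    (hK : K = ∑ i ∈ Finset.univ.filter (fun i : Fin n => (i : ℕ) < k), (m i).natDegree) :
    IsLeast {d : ℕ | ∃ a b : F[X], a.degree < (K : WithBot ℕ) ∧
        b.degree < (K : WithBot ℕ) ∧ a ≠ b ∧
        d = (Finset.univ.filter (fun i => ¬ m i ∣ (a - b))).card}
      (n - k + 1) := by
  have hdvd : ∀ i j, m i ∣ m j → i = j := fun i j h =>
    hinj ((hm i).eq_of_dvd_of_irreducible (hm j) (hirr i) (hirr j) h)
  have hweight (c : F[X]) :
      #(univ.filter fun i => ¬ m i ∣ c) = n - #(univ.filter fun i => m i ∣ c) := by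
    rw [filter_not, card_sdiff_of_subset (filter_subset _ _), card_univ, Fintype.card_fin]
  constructor
  · set T := univ.filter fun i : Fin n => (i : ℕ) < k - 1
    have hprod_ne : ∏ i ∈ T, m i ≠ 0 := prod_ne_zero_iff.mpr fun i _ => (hirr i).ne_zero
    refine ⟨∏ i ∈ T, m i, 0, ?_, by simp, hprod_ne, ?_⟩
    · rw [← natDegree_lt_iff_degree_lt hprod_ne,
        natDegree_prod _ _ fun i _ => (hirr i).ne_zero, hK]
      refine sum_lt_sum_of_subset (i := ⟨k - 1, by omega⟩) (fun i hi => ?_)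
        (by simp only [mem_filter, mem_univ, true_and]; omega)
        (by simp [T]) (hirr _).natDegree_pos (fun _ _ _ => Nat.zero_le _)
      simp only [T, mem_filter, mem_univ, true_and] at hi ⊢
      omega
    · have hdvd_iff := dvd_prod_iff_mem_of_prime (fun i => (hirr i).prime) hdvd T
      have hT : #T = k - 1 := by simp only [T, Fin.card_filter_val_lt]; omega
      rw [sub_zero, hweight, filter_congr fun i _ => hdvd_iff i, filter_mem_eq_inter,
        univ_inter, hT]
      omega
  · rintro d ⟨a, b, ha, hb, hab, rfl⟩
    have hc : a - b ≠ 0 := sub_ne_zero.mpr hab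
    have hdeg : (a - b).natDegree < K := (natDegree_lt_iff_degree_lt hc).mpr
      ((degree_sub_le a b).trans_lt (max_lt ha hb))
    have := Polynomial.card_filter_dvd_lt hkn hirr hdvd hord hc (hK ▸ hdeg)
    rw [hweight]
    omega
end

section
/- If a polynomial G(x) ∈ F[x] satisfies A(x)M_n(x) = G(x)Ê(x) for some A(x) ∈ F[x], then Λ_τ(x) divides G(x). -/
open Polynomial

open scoped Classical

/-- Converse of key equation I: if `A · M_n = G · Ê` with `Ê = Λ_ρ · E`,
then `Λ_τ` divides `G`. -/
theorem stmt_7 {F : Type*} [Field F] (n : ℕ)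
    (m : Fin n → F[X]) (hm : ∀ i, (m i).Monic) (hirr : ∀ i, Irreducible (m i))
    (hinj : Function.Injective m)
    (E : F[X]) (hEdeg : E.degree < (∏ i, m i).degree)
    (Sρ Sτ : Finset (Fin n)) (hdisj : Disjoint Sρ Sτ)
    (hsupp : Finset.univ.filter (fun i => ¬ m i ∣ E) = Sρ ∪ Sτ)
    (G A : F[X])
    (hkey : A * ∏ i, m i = G * ((∏ i ∈ Sρ, m i) * E)) :
    (∏ i ∈ Sτ, m i) ∣ G := by
  have hne : ∀ i j : Fin n, i ≠ j → ¬ m i ∣ m j := by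
    intro i j hij hdvd
    have := ((hirr i).associated_of_dvd (hirr j) hdvd)
    exact hij (hinj (Polynomial.eq_of_monic_of_associated (hm i) (hm j) this))
  have hdvdG : ∀ i ∈ Sτ, m i ∣ G := by
    intro i hi
    have hiprime : Prime (m i) := (hirr i).prime
    have h1 : m i ∣ A * ∏ j, m j :=
      Dvd.dvd.mul_left (Finset.dvd_prod_of_mem m (Finset.mem_univ i)) A
    rw [hkey] at h1
    have hiE : ¬ m i ∣ E := by
      have : i ∈ Finset.univ.filter (fun i => ¬ m i ∣ E) := by
        rw [hsupp]; exact Finset.mem_union_right _ hi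
      simpa using this
    have hiρ : ¬ m i ∣ ∏ j ∈ Sρ, m j := by
      intro h
      obtain ⟨j, hj, hdvd⟩ := hiprime.exists_mem_finset_dvd h
      have hij : i ≠ j := fun h => hdisj.forall_ne_finset hj hi h.symm
      exact hne i j hij hdvd
    rcases hiprime.dvd_mul.mp h1 with hG | h2
    · exact hG
    · rcases hiprime.dvd_mul.mp h2 with h | h
      · exact absurd h hiρ
      · exact absurd h hiE
  refine Finset.prod_dvd_of_coprime ?_ hdvdG
  intro i hi j hj hij
  exact (isCoprime_of_irreducible_dvd
    (fun h1 => (hirr i).ne_zero h1.1)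
    (fun p hp hpi hpj => hne i j hij ((hp.associated_of_dvd (hirr i) hpi).symm.dvd.trans hpj)))
end

section
/- Fixed-transform interpolation I: if G(x) is a multiple of Λ_τ(x) with deg G ≤ N − K − deg Λ_ρ, then a(x) = (Ŷ(x)G(x) mod M_n(x)) / (Λ_ρ(x)G(x)); in particular Λ_ρ(x)G(x) divides Ŷ(x)G(x) mod M_n(x). -/
open Polynomial

open scoped Classical

/-- Fixed-transform interpolation I: if `G` is a (nonzero) multiple of `Λ_τ`
with `deg G ≤ N - K - deg Λ_ρ`, then `Λ_ρ·G` divides `Ŷ·G mod M_n` and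
`a = (Ŷ·G mod M_n) / (Λ_ρ·G)`, where `Ŷ = Λ_ρ·Y` and `Y = a + E`. -/
theorem stmt_8 {F : Type*} [Field F] (n : ℕ)
    (m : Fin n → F[X]) (hm : ∀ i, (m i).Monic) (hirr : ∀ i, Irreducible (m i))
    (hinj : Function.Injective m)
    (N K : ℕ) (hN : N = (∏ i, m i).natDegree)
    (a : F[X]) (ha : a.degree < (K : WithBot ℕ))
    (E : F[X]) (hEdeg : E.degree < (∏ i, m i).degree)
    (Sρ Sτ : Finset (Fin n)) (hdisj : Disjoint Sρ Sτ)
    (hsupp : Finset.univ.filter (fun i => ¬ m i ∣ E) = Sρ ∪ Sτ)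
    (G : F[X]) (hG0 : G ≠ 0) (hGmul : (∏ i ∈ Sτ, m i) ∣ G)
    (hGdeg : G.natDegree + K + (∏ i ∈ Sρ, m i).natDegree ≤ N) :
    (∏ i ∈ Sρ, m i) * G ∣ ((∏ i ∈ Sρ, m i) * (a + E) * G) % ∏ i, m i ∧
    (((∏ i ∈ Sρ, m i) * (a + E) * G) % ∏ i, m i) / ((∏ i ∈ Sρ, m i) * G) = a := by
  set Λρ := ∏ i ∈ Sρ, m i with hΛρ
  set M := ∏ i, m i with hMdef
  have hMmonic : M.Monic := monic_prod_of_monic _ _ fun i _ => hm i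
  have hΛρmonic : Λρ.Monic := monic_prod_of_monic _ _ fun i _ => hm i
  have hdvdE : (∏ i ∈ (Sρ ∪ Sτ)ᶜ, m i) ∣ E := by
    apply Finset.prod_dvd_of_coprime
    · intro i hi j hj hij
      refine (hirr i).coprime_iff_not_dvd.mpr fun hd => hij ?_
      exact hinj (eq_of_monic_of_associated (hm i) (hm j)
        ((hirr i).associated_of_dvd (hirr j) hd))
    · intro i hi
      by_contra h
      exact (Finset.mem_compl.mp hi) (by rw [← hsupp]; simp [h])
  have hMsplit : M = Λρ * (∏ i ∈ Sτ, m i) * ∏ i ∈ (Sρ ∪ Sτ)ᶜ, m i := by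
    rw [hΛρ, ← Finset.prod_union hdisj, ← Finset.prod_union disjoint_compl_right,
      Finset.union_compl, hMdef]
  have hMdvd : M ∣ Λρ * E * G := by
    obtain ⟨g, hg⟩ := hGmul
    obtain ⟨e, he⟩ := hdvdE
    rw [hg, he, hMsplit]
    exact ⟨e * g, by ring⟩
  have hdeglt : (Λρ * a * G).degree < M.degree := by
    by_cases h0 : a = 0
    · simp only [h0, mul_zero, zero_mul, degree_zero]
      exact bot_lt_iff_ne_bot.mpr (by simp [degree_eq_natDegree hMmonic.ne_zero])
    · have hK : a.natDegree < K := by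
        have := (Polynomial.degree_eq_natDegree h0) ▸ ha
        exact_mod_cast this
      have hne : Λρ * a * G ≠ 0 :=
        mul_ne_zero (mul_ne_zero hΛρmonic.ne_zero h0) hG0
      have h1 : (Λρ * a * G).natDegree ≤ Λρ.natDegree + a.natDegree + G.natDegree :=
        le_trans natDegree_mul_le (Nat.add_le_add_right natDegree_mul_le _)
      have h2 : (Λρ * a * G).natDegree < M.natDegree := by omega
      rw [degree_eq_natDegree hne, degree_eq_natDegree hMmonic.ne_zero]
      exact_mod_cast h2
  have hmod : (Λρ * (a + E) * G) % M = Λρ * a * G := by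
    rw [Polynomial.mod_def, hMmonic.leadingCoeff, inv_one, map_one, mul_one,
      Polynomial.modByMonic_eq_of_dvd_sub hMmonic (p₂ := Λρ * a * G) (by
        have : Λρ * (a + E) * G - Λρ * a * G = Λρ * E * G := by ring
        rw [this]; exact hMdvd),
      (Polynomial.modByMonic_eq_self_iff hMmonic).2 hdeglt]
  rw [hmod]
  constructor
  · exact ⟨a, by ring⟩
  · have hne : Λρ * G ≠ 0 := mul_ne_zero hΛρmonic.ne_zero hG0
    rw [show Λρ * a * G = (Λρ * G) * a by ring]
    exact mul_div_cancel_left₀ _ hne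
end

section
/- Key equation II: with M̃_n(x) = M_n(x)/Λ_ρ(x), the polynomial Λ_τ(x) satisfies A(x)M̃_n(x) = Λ_τ(x)E(x) for some A(x) ∈ F[x] with deg A < deg Λ_ρ + deg Λ_τ. -/
open Polynomial

open scoped Classical

/-- Key equation II: with `M̃_n = M_n / Λ_ρ`, there exists `A` with
`A · M̃_n = Λ_τ · E` and `deg A < deg Λ_ρ + deg Λ_τ`. -/

theorem stmt_9 {F : Type*} [Field F] (n : ℕ)
    (m : Fin n → F[X]) (hm : ∀ i, (m i).Monic) (hirr : ∀ i, Irreducible (m i))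
    (hinj : Function.Injective m)
    (E : F[X]) (hEdeg : E.degree < (∏ i, m i).degree)
    (Sρ Sτ : Finset (Fin n)) (hdisj : Disjoint Sρ Sτ)
    (hsupp : Finset.univ.filter (fun i => ¬ m i ∣ E) = Sρ ∪ Sτ) :
    ∃ A : F[X],
      A * ((∏ i, m i) / ∏ i ∈ Sρ, m i) = (∏ i ∈ Sτ, m i) * E ∧
      A.degree < (∏ i ∈ Sρ, m i).degree + (∏ i ∈ Sτ, m i).degree := by
  by_cases hE : E = 0
  · subst hE
    have hS : Sρ ∪ Sτ = ∅ := by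
      rw [← hsupp]; simp
    have hSρ : Sρ = ∅ := by
      rcases Finset.union_eq_empty.mp hS with ⟨h1, h2⟩; exact h1
    have hSτ : Sτ = ∅ := by
      rcases Finset.union_eq_empty.mp hS with ⟨h1, h2⟩; exact h2
    refine ⟨0, by simp, ?_⟩
    simp [hSρ, hSτ]
  -- main case
  have hmne : ∀ i, m i ≠ 0 := fun i => (hm i).ne_zero
  have hco : ∀ i j : Fin n, i ≠ j → IsCoprime (m i) (m j) := by
    intro i j hij
    rw [(hirr i).coprime_iff_not_dvd]
    intro hdvd
    exact hij (hinj (eq_of_monic_of_associated (hm i) (hm j)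
      ((hirr i).associated_of_dvd (hirr j) hdvd)))
  have hΛρm : (∏ i ∈ Sρ, m i).Monic := monic_prod_of_monic _ _ fun i _ => hm i
  have hΛτm : (∏ i ∈ Sτ, m i).Monic := monic_prod_of_monic _ _ fun i _ => hm i
  have hMtm : (∏ i ∈ Sρᶜ, m i).Monic := monic_prod_of_monic _ _ fun i _ => hm i
  have hfac : (∏ i ∈ Sρ, m i) * (∏ i ∈ Sρᶜ, m i) = ∏ i, m i :=
    Finset.prod_mul_prod_compl Sρ m
  have hdivM : (∏ i, m i) / (∏ i ∈ Sρ, m i) = ∏ i ∈ Sρᶜ, m i := by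
    rw [← hfac]
    exact mul_div_cancel_left₀ _ hΛρm.ne_zero
  have hdvd : (∏ i ∈ Sρᶜ, m i) ∣ (∏ i ∈ Sτ, m i) * E := by
    refine Finset.prod_dvd_of_coprime ?_ ?_
    · intro i hi j hj hij; exact hco i j hij
    · intro i hi
      by_cases hiτ : i ∈ Sτ
      · exact dvd_mul_of_dvd_left (Finset.dvd_prod_of_mem m hiτ) E
      · have hni : i ∉ Finset.univ.filter (fun i => ¬ m i ∣ E) := by
          rw [hsupp]
          simp only [Finset.mem_union]
          push_neg
          exact ⟨Finset.mem_compl.mp hi, hiτ⟩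
        simp only [Finset.mem_filter, Finset.mem_univ, true_and, not_not] at hni
        exact dvd_mul_of_dvd_right hni _
  obtain ⟨A, hA⟩ := hdvd
  have hAeq : A * (∏ i ∈ Sρᶜ, m i) = (∏ i ∈ Sτ, m i) * E := by
    rw [mul_comm]; exact hA.symm
  refine ⟨A, by rw [hdivM]; exact hAeq, ?_⟩
  have hAne : A ≠ 0 := by
    intro h
    rw [h, zero_mul] at hAeq
    exact (mul_ne_zero hΛτm.ne_zero hE) hAeq.symm
  -- degree computation
  have hEd : E.natDegree < (∏ i, m i).natDegree :=
    natDegree_lt_natDegree hE hEdeg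
  have hdeg : A.natDegree + (∏ i ∈ Sρᶜ, m i).natDegree
      = (∏ i ∈ Sτ, m i).natDegree + E.natDegree := by
    rw [← natDegree_mul hAne hMtm.ne_zero, ← natDegree_mul hΛτm.ne_zero hE, hAeq]
  have hMd : (∏ i, m i).natDegree
      = (∏ i ∈ Sρ, m i).natDegree + (∏ i ∈ Sρᶜ, m i).natDegree := by
    rw [← hfac, natDegree_mul hΛρm.ne_zero hMtm.ne_zero]
  have hlt : A.natDegree < (∏ i ∈ Sρ, m i).natDegree + (∏ i ∈ Sτ, m i).natDegree := by
    omega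
  rw [degree_eq_natDegree hAne, degree_eq_natDegree hΛρm.ne_zero,
    degree_eq_natDegree hΛτm.ne_zero]
  exact_mod_cast hlt
end

section
/- Converse of key equation II: if a polynomial G(x) ∈ F[x] satisfies A(x)M̃_n(x) = G(x)E(x) for some A(x) ∈ F[x], then Λ_τ(x) divides G(x). -/
open Polynomial

open scoped Classical

/-- Converse of key equation II: if `A · M̃_n = G · E` with `M̃_n = M_n / Λ_ρ`,
then `Λ_τ` divides `G`. -/
theorem stmt_10 {F : Type*} [Field F] (n : ℕ)
    (m : Fin n → F[X]) (hm : ∀ i, (m i).Monic) (hirr : ∀ i, Irreducible (m i))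
    (hinj : Function.Injective m)
    (E : F[X]) (hEdeg : E.degree < (∏ i, m i).degree)
    (Sρ Sτ : Finset (Fin n)) (hdisj : Disjoint Sρ Sτ)
    (hsupp : Finset.univ.filter (fun i => ¬ m i ∣ E) = Sρ ∪ Sτ)
    (G A : F[X])
    (hkey : A * ((∏ i, m i) / ∏ i ∈ Sρ, m i) = G * E) :
    (∏ i ∈ Sτ, m i) ∣ G := by
  have hρ0 : (∏ i ∈ Sρ, m i) ≠ 0 :=
    Finset.prod_ne_zero_iff.2 fun i _ => (hirr i).ne_zero
  have hsplit : (∏ i, m i) = (∏ i ∈ Sρ, m i) * ∏ i ∈ Sρᶜ, m i :=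
    (Finset.prod_mul_prod_compl Sρ m).symm
  have hdiv : (∏ i, m i) / ∏ i ∈ Sρ, m i = ∏ i ∈ Sρᶜ, m i := by
    rw [hsplit, mul_comm, mul_div_cancel_right₀ _ hρ0]
  rw [hdiv] at hkey
  -- each m i, i ∈ Sτ, divides G
  have hGE : ∀ i ∈ Sτ, m i ∣ G := by
    intro i hi
    have hnotE : ¬ m i ∣ E := by
      have : i ∈ Finset.univ.filter (fun i => ¬ m i ∣ E) := by
        rw [hsupp]; exact Finset.mem_union_right _ hi
      simpa using this
    have hdvdGE : m i ∣ G * E := by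
      rw [← hkey]
      exact Dvd.dvd.mul_left (Finset.dvd_prod_of_mem m
        (Finset.mem_compl.2 (fun h => (Finset.disjoint_left.1 hdisj) h hi))) A
    rcases ((hirr i).prime.dvd_mul).1 hdvdGE with h | h
    · exact h
    · exact absurd h hnotE
  refine Finset.prod_dvd_of_coprime ?_ hGE
  intro i hi j hj hij
  have hne : m i ≠ m j := fun h => hij (hinj h)
  rcases EuclideanDomain.dvd_or_coprime (m i) (m j) (hirr i) with h | h
  · exact absurd (Polynomial.eq_of_monic_of_associated (hm i) (hm j)
      (associated_of_dvd_dvd h ((hirr i).dvd_symm (hirr j) h))) hne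
  · exact h
end

section
/- Fixed-transform interpolation II: if G(x) is a multiple of Λ_τ(x) with deg G ≤ N − K − deg Λ_ρ, then a(x) = (Y(x)G(x) mod M̃_n(x)) / G(x); in particular G(x) divides Y(x)G(x) mod M̃_n(x). -/
open Polynomial

open scoped Classical

/-- Fixed-transform interpolation II: if `G` is a (nonzero) multiple of `Λ_τ`
with `deg G ≤ N - K - deg Λ_ρ`, then `G` divides `Y·G mod M̃_n` and
`a = (Y·G mod M̃_n) / G`, where `Y = a + E` and `M̃_n = M_n / Λ_ρ`. -/
theorem stmt_11 {F : Type*} [Field F] (n : ℕ)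
    (m : Fin n → F[X]) (hm : ∀ i, (m i).Monic) (hirr : ∀ i, Irreducible (m i))
    (hinj : Function.Injective m)
    (N K : ℕ) (hN : N = (∏ i, m i).natDegree)
    (a : F[X]) (ha : a.degree < (K : WithBot ℕ))
    (E : F[X]) (hEdeg : E.degree < (∏ i, m i).degree)
    (Sρ Sτ : Finset (Fin n)) (hdisj : Disjoint Sρ Sτ)
    (hsupp : Finset.univ.filter (fun i => ¬ m i ∣ E) = Sρ ∪ Sτ)
    (G : F[X]) (hG0 : G ≠ 0) (hGmul : (∏ i ∈ Sτ, m i) ∣ G)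
    (hGdeg : G.natDegree + K + (∏ i ∈ Sρ, m i).natDegree ≤ N) :
    G ∣ ((a + E) * G) % ((∏ i, m i) / ∏ i ∈ Sρ, m i) ∧
    (((a + E) * G) % ((∏ i, m i) / ∏ i ∈ Sρ, m i)) / G = a := by
  have hmono : ∀ s : Finset (Fin n), (∏ i ∈ s, m i).Monic :=
    fun s => monic_prod_of_monic _ _ (fun i _ => hm i)
  -- pairwise coprimality
  have hcop : ∀ i j : Fin n, i ≠ j → IsCoprime (m i) (m j) := by
    intro i j hij
    rcases EuclideanDomain.dvd_or_coprime (m i) (m j) (hirr i) with h | h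
    · exfalso
      have hassoc : Associated (m i) (m j) :=
        (hirr i).associated_of_dvd (hirr j) h
      exact hij (hinj (Polynomial.eq_of_monic_of_associated (hm i) (hm j) hassoc))
    · exact h
  -- M̃ = ∏ over Sρᶜ
  have hMsplit : (∏ i, m i) = (∏ i ∈ Sρ, m i) * ∏ i ∈ Sρᶜ, m i :=
    (Finset.prod_mul_prod_compl Sρ m).symm
  have hMt : (∏ i, m i) / (∏ i ∈ Sρ, m i) = ∏ i ∈ Sρᶜ, m i := by
    rw [hMsplit, mul_div_cancel_left₀ _ (hmono Sρ).ne_zero]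
  set Mt : F[X] := ∏ i ∈ Sρᶜ, m i with hMtdef
  have hMtMonic : Mt.Monic := hmono _
  -- Sρᶜ = Sτ ∪ (Sρᶜ \ Sτ)
  have hsub : Sτ ⊆ Sρᶜ := by
    intro i hi
    simp only [Finset.mem_compl]
    exact fun h => (Finset.disjoint_left.mp hdisj) h hi
  have hMtsplit : Mt = (∏ i ∈ Sτ, m i) * ∏ i ∈ Sρᶜ \ Sτ, m i := by
    rw [hMtdef, ← Finset.prod_union (Finset.disjoint_sdiff),
      Finset.union_sdiff_of_subset hsub]
  -- each m i with i ∉ Sρ ∪ Sτ divides E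
  have hRE : (∏ i ∈ Sρᶜ \ Sτ, m i) ∣ E := by
    refine Finset.prod_dvd_of_coprime ?_ ?_
    · intro i hi j hj hij
      exact hcop i j hij
    · intro i hi
      simp only [Finset.mem_sdiff, Finset.mem_compl] at hi
      have : i ∉ Sρ ∪ Sτ := by
        simp [hi.1, hi.2]
      rw [← hsupp] at this
      simpa using this
  have hdvd : Mt ∣ E * G := by
    rw [hMtsplit, mul_comm E G]
    exact mul_dvd_mul hGmul hRE
  -- degree bound: degree (a * G) < degree Mt
  have hdegMt : (K : ℕ) + G.natDegree ≤ Mt.natDegree := by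
    have h1 : (∏ i, m i).natDegree = (∏ i ∈ Sρ, m i).natDegree + Mt.natDegree := by
      rw [hMsplit]
      exact Polynomial.natDegree_mul (hmono Sρ).ne_zero hMtMonic.ne_zero
    omega
  have hdegaG : (a * G).degree < Mt.degree := by
    rcases eq_or_ne a 0 with rfl | ha0
    · rw [zero_mul, Polynomial.degree_zero]
      exact bot_lt_iff_ne_bot.mpr (by simp [Polynomial.degree_eq_bot, hMtMonic.ne_zero])
    · rw [Polynomial.degree_mul, Polynomial.degree_eq_natDegree hMtMonic.ne_zero,
        Polynomial.degree_eq_natDegree ha0, Polynomial.degree_eq_natDegree hG0]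
      have ha' : a.natDegree < K := by
        rwa [Polynomial.degree_eq_natDegree ha0, Nat.cast_lt] at ha
      have : a.natDegree + G.natDegree < Mt.natDegree := by omega
      exact_mod_cast this
  -- the key computation with modByMonic
  obtain ⟨c, hc⟩ := hdvd
  have hkey : ((a + E) * G) % Mt = a * G := by
    rw [← Polynomial.modByMonic_eq_mod _ hMtMonic, add_mul, Polynomial.add_modByMonic,
      hc, Polynomial.self_mul_modByMonic hMtMonic, add_zero,
      (Polynomial.modByMonic_eq_self_iff hMtMonic).mpr hdegaG]
  rw [hMt, hkey]
  exact ⟨dvd_mul_left G a, mul_div_cancel_right₀ a hG0⟩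
end

section
/- Uniqueness of the error locator: Λ_e(x) = ∏_{i∈S_e} m_i(x) is the unique monic polynomial of smallest degree such that Λ_e(x)E(x) ≡ 0 (mod M_n(x)), and its degree equals the degree weight w_D(e). -/
open Polynomial

open scoped Classical

/-- Uniqueness of the error locator: `Λ_e = ∏_{i ∈ S_e} m i` is monic,
satisfies `Λ_e·E ≡ 0 (mod M_n)`, has degree equal to the degree weight
`w_D(e) = ∑_{i ∈ S_e} deg m i`, and is the unique monic polynomial of smallest
degree with `Λ·E ≡ 0 (mod M_n)`. -/
theorem stmt_14 {F : Type*} [Field F] (n : ℕ)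
    (m : Fin n → F[X]) (hm : ∀ i, (m i).Monic) (hirr : ∀ i, Irreducible (m i))
    (hinj : Function.Injective m)
    (E : F[X]) (hEdeg : E.degree < (∏ i, m i).degree) :
    (∏ i ∈ Finset.univ.filter (fun i => ¬ m i ∣ E), m i).Monic ∧
    (∏ i, m i) ∣ (∏ i ∈ Finset.univ.filter (fun i => ¬ m i ∣ E), m i) * E ∧
    (∏ i ∈ Finset.univ.filter (fun i => ¬ m i ∣ E), m i).natDegree =
      ∑ i ∈ Finset.univ.filter (fun i => ¬ m i ∣ E), (m i).natDegree ∧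
    (∀ Λ : F[X], Λ.Monic → (∏ i, m i) ∣ Λ * E →
      (∏ i ∈ Finset.univ.filter (fun i => ¬ m i ∣ E), m i).natDegree ≤ Λ.natDegree) ∧
    (∀ Λ : F[X], Λ.Monic → (∏ i, m i) ∣ Λ * E →
      Λ.natDegree = (∏ i ∈ Finset.univ.filter (fun i => ¬ m i ∣ E), m i).natDegree →
      Λ = ∏ i ∈ Finset.univ.filter (fun i => ¬ m i ∣ E), m i) := by
  set S := Finset.univ.filter (fun i => ¬ m i ∣ E) with hS
  have hLmonic : (∏ i ∈ S, m i).Monic := Polynomial.monic_prod_of_monic _ _ fun i _ => hm i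
  have hprime : ∀ i, Prime (m i) := fun i => (hirr i).prime
  have hcop : ∀ i j : Fin n, i ≠ j → IsCoprime (m i) (m j) := by
    intro i j hij
    rw [(hirr i).coprime_iff_not_dvd]
    intro hdvd
    have := Polynomial.eq_of_monic_of_associated (hm i) (hm j)
      ((hirr i).associated_of_dvd (hirr j) hdvd)
    exact hij (hinj this)
  -- divisibility of M into Λe * E
  have hsplit : (∏ i, m i) = (∏ i ∈ S, m i) * ∏ i ∈ Finset.univ.filter (fun i => m i ∣ E), m i := by
    rw [hS]
    rw [← Finset.prod_filter_mul_prod_filter_not Finset.univ (fun i => ¬ m i ∣ E) m]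
    simp
  have hdvdE : (∏ i ∈ Finset.univ.filter (fun i => m i ∣ E), m i) ∣ E := by
    apply Finset.prod_dvd_of_coprime
    · intro i hi j hj hij
      exact hcop i j hij
    · intro i hi
      exact (Finset.mem_filter.mp hi).2
  refine ⟨hLmonic, ?_, ?_, ?_, ?_⟩
  · rw [hsplit]
    exact mul_dvd_mul_left _ hdvdE
  · exact Polynomial.natDegree_prod_of_monic _ _ fun i _ => hm i
  · intro Λ hΛ hdvd
    have hLedvd : (∏ i ∈ S, m i) ∣ Λ := by
      apply Finset.prod_dvd_of_coprime
      · intro i hi j hj hij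
        exact hcop i j hij
      · intro i hi
        have hiS : ¬ m i ∣ E := (Finset.mem_filter.mp hi).2
        have : m i ∣ Λ * E := dvd_trans (Finset.dvd_prod_of_mem m (Finset.mem_univ i)) hdvd
        rcases (hprime i).2.2 _ _ this with h | h
        · exact h
        · exact absurd h hiS
    exact Polynomial.natDegree_le_of_dvd hLedvd hΛ.ne_zero
  · intro Λ hΛ hdvd hdeg
    have hLedvd : (∏ i ∈ S, m i) ∣ Λ := by
      apply Finset.prod_dvd_of_coprime
      · intro i hi j hj hij
        exact hcop i j hij
      · intro i hi
        have hiS : ¬ m i ∣ E := (Finset.mem_filter.mp hi).2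
        have : m i ∣ Λ * E := dvd_trans (Finset.dvd_prod_of_mem m (Finset.mem_univ i)) hdvd
        rcases (hprime i).2.2 _ _ this with h | h
        · exact h
        · exact absurd h hiS
    obtain ⟨u, hu⟩ := hLedvd
    have hu0 : u ≠ 0 := by
      rintro rfl
      rw [mul_zero] at hu
      exact hΛ.ne_zero hu
    have hdu : u.natDegree = 0 := by
      have := hdeg
      rw [hu, Polynomial.natDegree_mul hLmonic.ne_zero hu0] at this
      omega
    have humonic : u.Monic := by
      have : Λ.leadingCoeff = (∏ i ∈ S, m i).leadingCoeff * u.leadingCoeff := by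
        rw [hu, Polynomial.leadingCoeff_mul]
      rw [hΛ.leadingCoeff, hLmonic.leadingCoeff, one_mul] at this
      exact this.symm
    have : u = 1 := humonic.natDegree_eq_zero.mp hdu
    rw [hu, this, mul_one]
end

section
/- Partial GCD Algorithm I correctness: if deg Λ_τ ≤ (N − K − deg Λ_ρ)/2, then running the extended Euclidean algorithm on M_n(x) and Ŷ(x) = Λ_ρ(x)Y(x) with stopping criterion deg r < deg t + deg Λ_ρ + K produces the same s(x), t(x) as the algorithm run on M_n(x) and Ê(x) = Λ_ρ(x)E(x) until deg r = 0; moreover the returned remainder satisfies r(x) = t(x)Λ_ρ(x)a(x). -/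
open Polynomial

open scoped Classical

/-- State of the extended GCD algorithm: `(r, r̃, s, s̃, t, t̃)`. -/
structure GcdState (F : Type*) [Field F] where
  r : F[X]
  rt : F[X]
  s : F[X]
  st : F[X]
  t : F[X]
  tt : F[X]

/-- One outer iteration of the extended GCD algorithm. -/
noncomputable def gcdStep {F : Type*} [Field F] (σ : GcdState F) : GcdState F :=
  let q := σ.r / σ.rt
  ⟨σ.rt, σ.r - q * σ.rt, σ.st, σ.s - q * σ.st, σ.tt, σ.t - q * σ.tt⟩

/-- The state of the extended GCD algorithm on inputs `a, b` after `j` outer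
iterations, starting from `(a, b, 1, 0, 0, 1)`. -/
noncomputable def gcdRun {F : Type*} [Field F] (a b : F[X]) (j : ℕ) : GcdState F :=
  gcdStep^[j] ⟨a, b, 1, 0, 0, 1⟩

/-! Every remainder of the run on `(M, Λ_ρ E)` is a combination `s M + t Λ_ρ E`, hence divisible
by `G = Λ_ρ ∏_{i ∉ S_ρ ∪ S_τ} m_i`, whose degree `δ` is at least `deg Λ_τ + deg Λ_ρ + K`. So
this run ends with remainder `0`, and the determinant identity `r t̃ - r̃ t = ±M` bounds every
cofactor `t` by `deg M - δ = deg Λ_τ`. Replacing `Ê` by `Ŷ = Ê + Λ_ρ a` adds `t Λ_ρ a`, of degree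
`< δ`, to each remainder; this changes none of the quotients, so both runs produce the same
cofactors, and the criterion `deg r < deg t + deg Λ_ρ + K` first holds exactly when the `Ê`-run
reaches remainder `0`, where `r = t Λ_ρ a`. -/

lemma Polynomial.degree_mul_lt_of_le_of_lt {R : Type*} [Semiring R] [NoZeroDivisors R]
    {p q : R[X]} {m n : ℕ} (hp : p.degree ≤ m) (hq : q.degree < n) :
    (p * q).degree < (m + n : ℕ) := by
  rcases eq_or_ne p 0 with rfl | hp0
  · simp
  rw [degree_mul, Nat.cast_add]
  exact WithBot.add_lt_add_of_le_of_lt (degree_ne_bot.2 hp0) hp hq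

lemma Polynomial.div_eq_of_eq_mul_add {F : Type*} [Field F]
    {p q d r : F[X]} (hq : q ≠ 0) (h : p = d * q + r) (hr : r.degree < q.degree) : p / q = d := by
  have hmod : p % q = r := by
    rw [mod_eq_of_dvd_sub (p₂ := r) ⟨d, by rw [h]; ring⟩, (mod_eq_self_iff hq).2 hr]
  apply mul_left_cancel₀ hq
  linear_combination EuclideanDomain.div_add_mod p q - hmod + h

theorem Polynomial.pairwise_isCoprime_of_monic_irreducible {F ι : Type*} [Field F] {m : ι → F[X]}
    (hm : ∀ i, (m i).Monic) (hirr : ∀ i, Irreducible (m i)) (hinj : Function.Injective m) :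
    Pairwise fun i j => IsCoprime (m i) (m j) := fun i j hij =>
  (hirr i).coprime_iff_not_dvd.2 fun hdvd => hij <| hinj <|
    eq_of_monic_of_associated (hm i) (hm j) ((hirr i).associated_of_dvd (hirr j) hdvd)

/-- The state of the run on `(a, b + c)` in terms of the one on `(a, b)`: since `r = s a + t b`,
the remainders shift by `t c`, and the cofactors stay as long as the quotients agree. -/
noncomputable def GcdState.perturb {F : Type*} [Field F] (c : F[X]) (σ : GcdState F) :
    GcdState F :=
  ⟨σ.r + σ.t * c, σ.rt + σ.tt * c, σ.s, σ.st, σ.t, σ.tt⟩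

section GcdRun

variable {F : Type*} [Field F]

@[simp] lemma gcdStep_r (σ : GcdState F) : (gcdStep σ).r = σ.rt := rfl
@[simp] lemma gcdStep_rt (σ : GcdState F) : (gcdStep σ).rt = σ.r - σ.r / σ.rt * σ.rt := rfl
@[simp] lemma gcdStep_st (σ : GcdState F) : (gcdStep σ).st = σ.s - σ.r / σ.rt * σ.st := rfl
@[simp] lemma gcdStep_t (σ : GcdState F) : (gcdStep σ).t = σ.tt := rfl
@[simp] lemma gcdStep_tt (σ : GcdState F) : (gcdStep σ).tt = σ.t - σ.r / σ.rt * σ.tt := rfl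

lemma gcdRun_zero (a b : F[X]) : gcdRun a b 0 = ⟨a, b, 1, 0, 0, 1⟩ := rfl

lemma gcdRun_succ (a b : F[X]) (j : ℕ) : gcdRun a b (j + 1) = gcdStep (gcdRun a b j) :=
  Function.iterate_succ_apply' _ _ _

lemma degree_gcdStep_rt_lt {σ : GcdState F} (h : σ.rt ≠ 0) :
    (gcdStep σ).rt.degree < σ.rt.degree := by
  simpa [EuclideanDomain.mod_eq_sub_mul_div, mul_comm] using degree_mod_lt σ.r h

lemma gcdRun_bezout (a b : F[X]) (j : ℕ) :
    (gcdRun a b j).r = (gcdRun a b j).s * a + (gcdRun a b j).t * b ∧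
      (gcdRun a b j).rt = (gcdRun a b j).st * a + (gcdRun a b j).tt * b := by
  induction j with
  | zero => simp [gcdRun_zero]
  | succ j ih =>
    rw [gcdRun_succ]
    refine ⟨ih.2, ?_⟩
    simp only [gcdStep_rt, gcdStep_st, gcdStep_tt]
    linear_combination ih.1 - (gcdRun a b j).r / (gcdRun a b j).rt * ih.2

lemma gcdRun_det (a b : F[X]) (j : ℕ) :
    (gcdRun a b j).r * (gcdRun a b j).tt - (gcdRun a b j).rt * (gcdRun a b j).t =
      (-1) ^ j * a := by
  induction j with
  | zero => simp [gcdRun_zero]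
  | succ j ih =>
    rw [gcdRun_succ, pow_succ]
    simp only [gcdStep_r, gcdStep_rt, gcdStep_t, gcdStep_tt]
    linear_combination -ih

lemma dvd_gcdRun_rt {a b g : F[X]} (ha : g ∣ a) (hb : g ∣ b) (j : ℕ) :
    g ∣ (gcdRun a b j).rt := by
  rw [(gcdRun_bezout a b j).2]
  exact dvd_add (dvd_mul_of_dvd_right ha _) (dvd_mul_of_dvd_right hb _)

lemma degree_gcdRun_tt_le {a b : F[X]} {τ δ : ℕ} (ha : a.degree ≤ (τ + δ : ℕ)) {j : ℕ}
    (hrt : ∀ i < j, (δ : WithBot ℕ) ≤ (gcdRun a b i).rt.degree) :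
    (gcdRun a b j).tt.degree ≤ τ := by
  induction j with
  | zero => simp [gcdRun_zero]
  | succ j ih =>
    set σ := gcdRun a b j
    have hδ : (δ : WithBot ℕ) ≤ σ.rt.degree := hrt j j.lt_succ_self
    have hσ : σ.rt.degree ≠ ⊥ := ne_bot_of_le_ne_bot WithBot.coe_ne_bot hδ
    have htt : σ.tt.degree ≤ τ := ih fun i hi => hrt i (hi.trans j.lt_succ_self)
    have hdet : σ.rt * (gcdStep σ).tt = (-1) ^ (j + 1) * a + (gcdStep σ).rt * σ.tt := by
      have := gcdRun_det a b (j + 1)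
      rw [gcdRun_succ] at this
      simp only [gcdStep_r, gcdStep_t] at this ⊢
      linear_combination this
    have hbound : (σ.rt * (gcdStep σ).tt).degree ≤ σ.rt.degree + τ := by
      rw [hdet]
      refine (degree_add_le _ _).trans (max_le ?_ ?_)
      · calc ((-1) ^ (j + 1) * a).degree = a.degree := by simp [degree_mul]
          _ ≤ (δ : WithBot ℕ) + τ := by rw [← Nat.cast_add, add_comm]; exact ha
          _ ≤ σ.rt.degree + τ := by gcongr
      · rw [degree_mul]
        gcongr
        exact (degree_gcdStep_rt_lt (degree_ne_bot.1 hσ)).le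
    rw [degree_mul] at hbound
    rw [gcdRun_succ]
    exact (WithBot.add_le_add_iff_left hσ).1 hbound

lemma gcdStep_perturb {σ : GcdState F} {c : F[X]} (h : (σ.tt * c).degree < σ.rt.degree)
    (h' : ((gcdStep σ).tt * c).degree < σ.rt.degree) :
    gcdStep (σ.perturb c) = (gcdStep σ).perturb c := by
  have hrt : σ.rt ≠ 0 := by rintro hz; simp [hz] at h
  have hdeg : (σ.rt + σ.tt * c).degree = σ.rt.degree := degree_add_eq_left_of_degree_lt h
  have hq : (σ.r + σ.t * c) / (σ.rt + σ.tt * c) = σ.r / σ.rt := by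
    refine div_eq_of_eq_mul_add (r := (gcdStep σ).rt + (gcdStep σ).tt * c) ?_ ?_ ?_
    · rintro hz
      rw [hz, degree_zero] at hdeg
      exact hrt (degree_eq_bot.1 hdeg.symm)
    · simp only [gcdStep_rt, gcdStep_tt]
      ring
    · rw [hdeg]
      exact (degree_add_le _ _).trans_lt (max_lt (degree_gcdStep_rt_lt hrt) h')
  simp only [gcdStep, GcdState.perturb, hq, GcdState.mk.injEq]
  refine ⟨trivial, ?_, trivial, trivial, trivial, trivial⟩
  ring

lemma gcdRun_add_eq_perturb {a b c : F[X]} {δ j : ℕ}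
    (hc : ∀ i ≤ j, ((gcdRun a b i).tt * c).degree < δ)
    (hrt : ∀ i < j, (δ : WithBot ℕ) ≤ (gcdRun a b i).rt.degree) :
    gcdRun a (b + c) j = (gcdRun a b j).perturb c := by
  induction j with
  | zero => simp [gcdRun_zero, GcdState.perturb]
  | succ j ih =>
    have hδ := hrt j j.lt_succ_self
    rw [gcdRun_succ, gcdRun_succ, ih (fun i hi => hc i (hi.trans j.le_succ))
      (fun i hi => hrt i (hi.trans j.lt_succ_self))]
    refine gcdStep_perturb ((hc j j.le_succ).trans_le hδ) ?_
    rw [← gcdRun_succ]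
    exact (hc (j + 1) le_rfl).trans_le hδ

theorem gcdRun_add_of_dvd {M B c G : F[X]} {τ κ : ℕ} (hGM : G ∣ M) (hGB : G ∣ B) (hM0 : M ≠ 0)
    (hMdeg : M.natDegree ≤ τ + G.natDegree) (hc : c.degree < κ) (hτκ : τ + κ ≤ G.natDegree)
    (hG : 0 < G.natDegree) {jE jY : ℕ}
    (hstopE : (gcdRun M B jE).rt.degree ≤ 0)
    (hfirstE : ∀ j < jE, ¬ (gcdRun M B j).rt.degree ≤ 0)
    (hstopY : (gcdRun M (B + c) jY).rt.degree < (gcdRun M (B + c) jY).tt.degree + κ)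
    (hfirstY : ∀ j < jY,
      ¬ (gcdRun M (B + c) j).rt.degree < (gcdRun M (B + c) j).tt.degree + κ) :
    jY = jE ∧ gcdRun M (B + c) jY = (gcdRun M B jE).perturb c ∧ (gcdRun M B jE).rt = 0 := by
  set δ := G.natDegree
  have hG0 : G ≠ 0 := ne_zero_of_dvd_ne_zero hM0 hGM
  have hrt_ge (j : ℕ) (h : (gcdRun M B j).rt ≠ 0) :
      (δ : WithBot ℕ) ≤ (gcdRun M B j).rt.degree :=
    (degree_eq_natDegree hG0).symm.trans_le (degree_le_of_dvd (dvd_gcdRun_rt hGM hGB j) h)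
  have hrtE (j : ℕ) (hj : j < jE) : (δ : WithBot ℕ) ≤ (gcdRun M B j).rt.degree :=
    hrt_ge j fun h => hfirstE j hj (by simp [h])
  have htt (j : ℕ) (hj : j ≤ jE) : (gcdRun M B j).tt.degree ≤ τ :=
    degree_gcdRun_tt_le (degree_le_natDegree.trans (by exact_mod_cast hMdeg))
      fun i hi => hrtE i (hi.trans_le hj)
  have httc (j : ℕ) (hj : j ≤ jE) : ((gcdRun M B j).tt * c).degree < δ :=
    (degree_mul_lt_of_le_of_lt (htt j hj) hc).trans_le (by exact_mod_cast hτκ)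
  have hrun (j : ℕ) (hj : j ≤ jE) : gcdRun M (B + c) j = (gcdRun M B j).perturb c :=
    gcdRun_add_eq_perturb (fun i hi => httc i (hi.trans hj)) fun i hi => hrtE i (hi.trans_le hj)
  have hrt0 : (gcdRun M B jE).rt = 0 := by
    by_contra h
    have : δ ≤ 0 := by exact_mod_cast (hrt_ge jE h).trans hstopE
    omega
  have htt0 : (gcdRun M B jE).tt ≠ 0 := by
    intro h
    have := gcdRun_det M B jE
    simp [h, hrt0, hM0] at this
  have hstopAtE : (gcdRun M (B + c) jE).rt.degree < (gcdRun M (B + c) jE).tt.degree + κ := by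
    simp only [hrun jE le_rfl, GcdState.perturb, hrt0, zero_add, degree_mul]
    exact WithBot.add_lt_add_left (degree_ne_bot.2 htt0) hc
  have hnostop (j : ℕ) (hj : j < jE) :
      ¬ (gcdRun M (B + c) j).rt.degree < (gcdRun M (B + c) j).tt.degree + κ := by
    simp only [hrun j hj.le, GcdState.perturb, not_lt]
    rw [degree_add_eq_left_of_degree_lt ((httc j hj.le).trans_le (hrtE j hj))]
    calc (gcdRun M B j).tt.degree + κ ≤ (τ + κ : ℕ) := by push_cast; gcongr; exact htt j hj.le
      _ ≤ δ := by exact_mod_cast hτκ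
      _ ≤ _ := hrtE j hj
  obtain rfl : jY = jE :=
    le_antisymm (not_lt.1 fun h => hfirstY jE h hstopAtE) (not_lt.1 fun h => hnostop jY h hstopY)
  exact ⟨rfl, hrun jY le_rfl, hrt0⟩

end GcdRun

/-- Partial GCD Algorithm I: if `deg Λ_τ ≤ (N - K - deg Λ_ρ)/2`, then the
extended Euclidean algorithm on `M_n` and `Ŷ = Λ_ρ·Y` stopped when
`deg r < deg t + deg Λ_ρ + K` (first reached after `jY` iterations) returns the
same `s, t`, after the same number of iterations, as the algorithm on `M_n` and
`Ê = Λ_ρ·E` run until `deg r = 0` (first reached after `jE` iterations);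
moreover the returned remainder is `r = t·Λ_ρ·a`. -/
theorem stmt_15 {F : Type*} [Field F] (n : ℕ)
    (m : Fin n → F[X]) (hm : ∀ i, (m i).Monic) (hirr : ∀ i, Irreducible (m i))
    (hinj : Function.Injective m)
    (N K : ℕ) (hN : N = (∏ i, m i).natDegree)
    (a : F[X]) (ha : a.degree < (K : WithBot ℕ))
    (E : F[X]) (hE0 : E ≠ 0) (hEdeg : E.degree < (∏ i, m i).degree)
    (Sρ Sτ : Finset (Fin n)) (hdisj : Disjoint Sρ Sτ)
    (hsupp : Finset.univ.filter (fun i => ¬ m i ∣ E) = Sρ ∪ Sτ)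
    (hbound : 2 * (∏ i ∈ Sτ, m i).natDegree + K + (∏ i ∈ Sρ, m i).natDegree ≤ N)
    (jE jY : ℕ)
    (hstopE : (gcdRun (∏ i, m i) ((∏ i ∈ Sρ, m i) * E) jE).rt.degree ≤ 0)
    (hfirstE : ∀ j < jE, ¬ (gcdRun (∏ i, m i) ((∏ i ∈ Sρ, m i) * E) j).rt.degree ≤ 0)
    (hstopY : (gcdRun (∏ i, m i) ((∏ i ∈ Sρ, m i) * (a + E)) jY).rt.degree <
      (gcdRun (∏ i, m i) ((∏ i ∈ Sρ, m i) * (a + E)) jY).tt.degree +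
        (((∏ i ∈ Sρ, m i).natDegree + K : ℕ) : WithBot ℕ))
    (hfirstY : ∀ j < jY,
      ¬ (gcdRun (∏ i, m i) ((∏ i ∈ Sρ, m i) * (a + E)) j).rt.degree <
        (gcdRun (∏ i, m i) ((∏ i ∈ Sρ, m i) * (a + E)) j).tt.degree +
          (((∏ i ∈ Sρ, m i).natDegree + K : ℕ) : WithBot ℕ)) :
    jY = jE ∧
    (gcdRun (∏ i, m i) ((∏ i ∈ Sρ, m i) * (a + E)) jY).st =
      (gcdRun (∏ i, m i) ((∏ i ∈ Sρ, m i) * E) jE).st ∧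
    (gcdRun (∏ i, m i) ((∏ i ∈ Sρ, m i) * (a + E)) jY).tt =
      (gcdRun (∏ i, m i) ((∏ i ∈ Sρ, m i) * E) jE).tt ∧
    (gcdRun (∏ i, m i) ((∏ i ∈ Sρ, m i) * (a + E)) jY).rt =
      (gcdRun (∏ i, m i) ((∏ i ∈ Sρ, m i) * (a + E)) jY).tt * (∏ i ∈ Sρ, m i) * a := by
  set Λρ := ∏ i ∈ Sρ, m i
  set Λτ := ∏ i ∈ Sτ, m i
  set P := ∏ i ∈ (Sρ ∪ Sτ)ᶜ, m i
  have hmonic (s : Finset (Fin n)) : (∏ i ∈ s, m i).Monic := monic_prod_of_monic _ _ fun i _ => hm i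
  have hM : ∏ i, m i = Λτ * (Λρ * P) := by
    rw [← Finset.prod_mul_prod_compl (Sρ ∪ Sτ) m, Finset.prod_union hdisj]
    ring
  have hPE : P ∣ E :=
    Finset.prod_dvd_of_coprime
      ((pairwise_isCoprime_of_monic_irreducible hm hirr hinj).set_pairwise _) fun i hi =>
        by_contra fun h =>
          Finset.mem_compl.1 hi (hsupp ▸ Finset.mem_filter.2 ⟨Finset.mem_univ i, h⟩)
  have hNdeg : N = Λτ.natDegree + (Λρ * P).natDegree := by
    rw [hN, hM, natDegree_mul (hmonic _).ne_zero ((hmonic _).mul (hmonic _)).ne_zero]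
  have hρ : Λρ.natDegree ≤ (Λρ * P).natDegree :=
    natDegree_le_of_dvd (dvd_mul_right _ _) ((hmonic _).mul (hmonic _)).ne_zero
  have hN0 : 0 < N :=
    hN ▸ natDegree_pos_iff_degree_pos.2 ((zero_le_degree_iff.2 hE0).trans_lt hEdeg)
  have hc : (Λρ * a).degree < (Λρ.natDegree + K : ℕ) :=
    degree_mul_lt_of_le_of_lt degree_le_natDegree ha
  rw [show Λρ * (a + E) = Λρ * E + Λρ * a by ring] at hstopY hfirstY ⊢
  obtain ⟨rfl, hrun, hrt0⟩ := gcdRun_add_of_dvd (τ := Λτ.natDegree) (hM ▸ dvd_mul_left _ _)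
    (mul_dvd_mul_left Λρ hPE) (hmonic _).ne_zero (by omega) hc (by omega) (by omega)
    hstopE hfirstE hstopY hfirstY
  simp only [hrun, GcdState.perturb, hrt0, zero_add, true_and]
  ring
end

section
/- Message recovery under approach II: if the extended GCD algorithm applied to M̃_n(x) and E(x) terminates with outputs t(x) = γΛ_τ(x) and deg Λ_τ ≤ (N − K − deg Λ_ρ)/2, then a(x) = (t(x)Y(x) mod M̃_n(x)) / t(x); in particular t(x) divides t(x)Y(x) mod M̃_n(x) and the quotient has degree less than K. -/
open Polynomial

open scoped Classical

/-- Message recovery under approach II: if `t = γ·Λ_τ` (`γ ≠ 0`) and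
`deg Λ_τ ≤ (N - K - deg Λ_ρ)/2`, then `t` divides `t·Y mod M̃_n`,
`a = (t·Y mod M̃_n) / t`, and the quotient has degree `< K`, where
`Y = a + E` and `M̃_n = M_n / Λ_ρ`. -/
theorem stmt_17 {F : Type*} [Field F] (n : ℕ)
    (m : Fin n → F[X]) (hm : ∀ i, (m i).Monic) (hirr : ∀ i, Irreducible (m i))
    (hinj : Function.Injective m)
    (N K : ℕ) (hN : N = (∏ i, m i).natDegree)
    (a : F[X]) (ha : a.degree < (K : WithBot ℕ))
    (E : F[X]) (hEdeg : E.degree < (∏ i, m i).degree)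
    (Sρ Sτ : Finset (Fin n)) (hdisj : Disjoint Sρ Sτ)
    (hsupp : Finset.univ.filter (fun i => ¬ m i ∣ E) = Sρ ∪ Sτ)
    (hbound : 2 * (∏ i ∈ Sτ, m i).natDegree + K + (∏ i ∈ Sρ, m i).natDegree ≤ N)
    (γ : F) (hγ : γ ≠ 0) :
    (C γ * ∏ i ∈ Sτ, m i) ∣
        ((C γ * ∏ i ∈ Sτ, m i) * (a + E)) % ((∏ i, m i) / ∏ i ∈ Sρ, m i) ∧
    (((C γ * ∏ i ∈ Sτ, m i) * (a + E)) % ((∏ i, m i) / ∏ i ∈ Sρ, m i)) /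
        (C γ * ∏ i ∈ Sτ, m i) = a ∧
    ((((C γ * ∏ i ∈ Sτ, m i) * (a + E)) % ((∏ i, m i) / ∏ i ∈ Sρ, m i)) /
        (C γ * ∏ i ∈ Sτ, m i)).degree < (K : WithBot ℕ) := by
  set Λρ : F[X] := ∏ i ∈ Sρ, m i with hΛρ
  set Λτ : F[X] := ∏ i ∈ Sτ, m i with hΛτ
  set t : F[X] := C γ * Λτ with ht
  have hΛρm : Λρ.Monic := monic_prod_of_monic _ _ fun i _ => hm i
  have hΛτm : Λτ.Monic := monic_prod_of_monic _ _ fun i _ => hm i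
  have hMt : (∏ i, m i) = Λρ * ∏ i ∈ Sρᶜ, m i :=
    (Finset.prod_mul_prod_compl Sρ m).symm
  have hMc : (∏ i ∈ Sρᶜ, m i).Monic := monic_prod_of_monic _ _ fun i _ => hm i
  have hdiv : (∏ i, m i) / Λρ = ∏ i ∈ Sρᶜ, m i := by
    rw [hMt]
    exact mul_div_cancel_left₀ _ hΛρm.ne_zero
  rw [hdiv]
  -- `M̃` divides `t * E`
  have hSτc : Sτ ⊆ Sρᶜ := fun i hi =>
    Finset.mem_compl.2 fun hρ => (Finset.disjoint_left.1 hdisj hρ) hi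
  have hcompl : Sρᶜ = Sτ ∪ (Sρᶜ \ Sτ) := by
    rw [Finset.union_sdiff_of_subset hSτc]
  have hEdvd : ∀ i ∈ Sρᶜ \ Sτ, m i ∣ E := by
    intro i hi
    rw [Finset.mem_sdiff, Finset.mem_compl] at hi
    by_contra h
    have : i ∈ Finset.univ.filter fun i => ¬ m i ∣ E := by
      simp [h]
    rw [hsupp, Finset.mem_union] at this
    rcases this with h1 | h2
    · exact hi.1 h1
    · exact hi.2 h2
  have hprodE : (∏ i ∈ Sρᶜ \ Sτ, m i) ∣ E := by
    apply Finset.prod_dvd_of_coprime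
    · intro i hi j hj hij
      rcases (EuclideanDomain.dvd_or_coprime (m i) (m j) (hirr i)) with h | h
      · exact absurd (eq_of_monic_of_associated (hm i) (hm j)
          ((hirr i).associated_of_dvd (hirr j) h)) (fun e => hij (hinj e))
      · exact h
    · intro i hi; exact hEdvd i hi
  have hdvdtE : (∏ i ∈ Sρᶜ, m i) ∣ t * E := by
    rw [hcompl, Finset.prod_union (Finset.disjoint_sdiff), ht]
    rcases hprodE with ⟨q, hq⟩
    exact ⟨C γ * q, by rw [hq]; ring⟩
  -- degree of `t * a` is less than degree of `M̃`
  have htne : t ≠ 0 := mul_ne_zero (by simpa using hγ) hΛτm.ne_zero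
  have hNdeg : N = Λρ.natDegree + (∏ i ∈ Sρᶜ, m i).natDegree := by
    rw [hN, hMt, natDegree_mul hΛρm.ne_zero hMc.ne_zero]
  have hdegta : (t * a).degree < (∏ i ∈ Sρᶜ, m i).degree := by
    rcases eq_or_ne a 0 with rfl | ha0
    · rw [mul_zero, degree_zero]
      exact bot_lt_iff_ne_bot.2 (fun h => hMc.ne_zero (degree_eq_bot.1 h))
    · rw [degree_mul, degree_eq_natDegree hMc.ne_zero, ht, degree_mul, degree_C hγ, zero_add,
        degree_eq_natDegree hΛτm.ne_zero, degree_eq_natDegree ha0]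
      have hK : a.natDegree < K := by
        have := ha; rw [degree_eq_natDegree ha0] at this
        exact_mod_cast this
      have : Λτ.natDegree + a.natDegree < (∏ i ∈ Sρᶜ, m i).natDegree := by omega
      exact_mod_cast this
  -- the key mod computation
  have hkey : (t * (a + E)) % (∏ i ∈ Sρᶜ, m i) = t * a := by
    have h1 : (t * (a + E)) %ₘ (∏ i ∈ Sρᶜ, m i) = (t * a) %ₘ (∏ i ∈ Sρᶜ, m i) := by
      apply modByMonic_eq_of_dvd_sub hMc
      have : t * (a + E) - t * a = t * E := by ring
      rw [this]; exact hdvdtE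
    rw [← modByMonic_eq_mod _ hMc, h1, modByMonic_eq_mod _ hMc,
      (mod_eq_self_iff hMc.ne_zero).2 hdegta]
  rw [hkey]
  refine ⟨⟨a, rfl⟩, ?_, ?_⟩
  · exact mul_div_cancel_left₀ a htne
  · rw [mul_div_cancel_left₀ a htne]; exact ha
end
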